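/- Let A ∈ W^{1,∞}(ℝ^n, M_{n×n}(ℝ)) (bounded Lipschitz matrix-valued function), 0 < β < 1, and u₀ ∈ ℝ^n. Consider the fractional ODE u'(t) = A(u(t)) · (1/Γ(1-β)) ∫_0^t (t-s)^{-β} u'(s) ds with u(0) = u₀, posed for u ∈ C¹([0,t₀],ℝ^n). If u ∈ C¹([0,t₀],ℝ^n) solves the equation with u' Hölder continuous, and v is another such solution with the same data, then u = v on [0, t₀'] for some 0 < t₀' ≤ t₀. -/

import Mathlib

open Set
open Set MeasureTheory

section helpers
variable {n : ℕ}

lemma holder_cont {E : Type*} [NormedAddCommGroup E] {f : ℝ → E} {t₀ γ M : ℝ} (hγ : 0 < γ)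
    (h : ∀ s ∈ Icc (0:ℝ) t₀, ∀ t ∈ Icc (0:ℝ) t₀, ‖f t - f s‖ ≤ M * |t - s| ^ γ) :
    ContinuousOn f (Icc 0 t₀) := by
  intro x hx
  have hg : Filter.Tendsto (fun t => M * |t - x| ^ γ) (nhdsWithin x (Icc 0 t₀)) (nhds 0) := by
    have h1 : Filter.Tendsto (fun t : ℝ => |t - x|) (nhdsWithin x (Icc 0 t₀)) (nhds 0) := by
      have hc : Continuous (fun t : ℝ => |t - x|) :=
        (continuous_id.sub continuous_const).abs
      have := (hc.tendsto x).mono_left (nhdsWithin_le_nhds (s := Icc 0 t₀))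
      simpa using this
    have h2 : Filter.Tendsto (fun y : ℝ => M * y ^ γ) (nhds 0) (nhds 0) := by
      have := (Real.continuousAt_rpow_const 0 γ (Or.inr hγ.le)).tendsto
      rw [Real.zero_rpow hγ.ne'] at this
      simpa using (this.const_mul M)
    exact h2.comp h1
  have : Filter.Tendsto (fun t => ‖f t - f x‖) (nhdsWithin x (Icc 0 t₀)) (nhds 0) :=
    squeeze_zero' (Filter.Eventually.of_forall fun t => norm_nonneg _)
      (eventually_nhdsWithin_of_forall fun t ht => h x hx t ht) hg
  exact tendsto_iff_norm_sub_tendsto_zero.mpr this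

lemma ker_integrableOn' {β t : ℝ} (hβ1 : β < 1) (ht : 0 ≤ t) :
    IntegrableOn (fun s => (t - s) ^ (-β)) (Ioc 0 t) := by
  have h : IntervalIntegrable (fun x : ℝ => x ^ (-β)) volume 0 t :=
    intervalIntegral.intervalIntegrable_rpow' (by linarith)
  have h2 := (h.comp_sub_left t).symm
  rw [sub_self, sub_zero] at h2
  exact (intervalIntegrable_iff_integrableOn_Ioc_of_le ht).mp h2

lemma ker_integral' {β t : ℝ} (hβ1 : β < 1) (ht : 0 ≤ t) :
    ∫ s in Ioc (0:ℝ) t, (t - s) ^ (-β) = t ^ (1 - β) / (1 - β) := by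
  rw [← intervalIntegral.integral_of_le ht,
    intervalIntegral.integral_comp_sub_left (fun x : ℝ => x ^ (-β)) t, sub_self, sub_zero,
    intervalIntegral.integral_symm, integral_rpow (Or.inl (by linarith : (-1:ℝ) < -β)),
    Real.zero_rpow (by linarith : -β + 1 ≠ 0)]
  rw [show -β + 1 = 1 - β by ring]
  ring

lemma smul_integrableOn' {β t t₀ B : ℝ} {f : ℝ → Fin n → ℝ} (hβ1 : β < 1)
    (ht : 0 ≤ t) (ht' : t ≤ t₀) (hf : ContinuousOn f (Icc 0 t₀))
    (hB : ∀ s ∈ Ioc (0:ℝ) t, ‖f s‖ ≤ B) :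
    IntegrableOn (fun s => (t - s) ^ (-β) • f s) (Ioc 0 t) := by
  have hsub : Ioc (0:ℝ) t ⊆ Icc 0 t₀ := fun s hs => ⟨hs.1.le, hs.2.trans ht'⟩
  have hker := ker_integrableOn' (β := β) hβ1 ht
  have hmeas : AEStronglyMeasurable (fun s => (t - s) ^ (-β) • f s)
      (volume.restrict (Ioc 0 t)) := by
    apply AEStronglyMeasurable.fun_smul
    · exact ((measurable_const.sub measurable_id).pow_const _).aestronglyMeasurable
    · exact ((hf.mono hsub).aestronglyMeasurable measurableSet_Ioc)
  refine (hker.const_mul B).mono' hmeas ?_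
  filter_upwards [ae_restrict_mem measurableSet_Ioc] with s hs
  have h1 : (0:ℝ) ≤ (t - s) ^ (-β) := Real.rpow_nonneg (by linarith [hs.2]) _
  rw [norm_smul, Real.norm_eq_abs, abs_of_nonneg h1, mul_comm B]
  exact mul_le_mul_of_nonneg_left (hB s hs) h1

lemma smul_norm_bound' {β t t₀ B : ℝ} {f : ℝ → Fin n → ℝ} (hβ1 : β < 1)
    (ht : 0 ≤ t) (ht' : t ≤ t₀) (hf : ContinuousOn f (Icc 0 t₀))
    (hB : ∀ s ∈ Ioc (0:ℝ) t, ‖f s‖ ≤ B) :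
    ‖∫ s in Ioc (0:ℝ) t, (t - s) ^ (-β) • f s‖ ≤ B * (t ^ (1 - β) / (1 - β)) := by
  have hint := smul_integrableOn' hβ1 ht ht' hf hB
  have hker := ker_integrableOn' (β := β) hβ1 ht
  calc ‖∫ s in Ioc (0:ℝ) t, (t - s) ^ (-β) • f s‖
      ≤ ∫ s in Ioc (0:ℝ) t, ‖(t - s) ^ (-β) • f s‖ := norm_integral_le_integral_norm _
    _ ≤ ∫ s in Ioc (0:ℝ) t, B * (t - s) ^ (-β) := by
        refine setIntegral_mono_on hint.norm (hker.const_mul B) measurableSet_Ioc ?_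
        intro s hs
        have h1 : (0:ℝ) ≤ (t - s) ^ (-β) := Real.rpow_nonneg (by linarith [hs.2]) _
        rw [norm_smul, Real.norm_eq_abs, abs_of_nonneg h1, mul_comm B]
        exact mul_le_mul_of_nonneg_left (hB s hs) h1
    _ = B * (t ^ (1 - β) / (1 - β)) := by
        rw [integral_const_mul, ker_integral' hβ1 ht]

end helpers


theorem stmt_17 (n : ℕ) (β T K : ℝ) (hβ : 0 < β) (hβ1 : β < 1) (hT : 0 < T)
    (A : (Fin n → ℝ) → ((Fin n → ℝ) →L[ℝ] (Fin n → ℝ))) (L : NNReal)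
    (hAbd : ∀ x, ‖A x‖ ≤ K) (hALip : LipschitzWith L A)
    (u₀ : Fin n → ℝ) (t₀ : ℝ) (ht₀ : 0 < t₀) (ht₀T : t₀ ≤ T)
    (u u' v v' : ℝ → (Fin n → ℝ))
    (hu : ∀ t ∈ Icc (0:ℝ) t₀, HasDerivWithinAt u (u' t) (Icc 0 t₀) t)
    (hv : ∀ t ∈ Icc (0:ℝ) t₀, HasDerivWithinAt v (v' t) (Icc 0 t₀) t)
    (hu'Holder : ∃ γ M : ℝ, 0 < γ ∧ ∀ s ∈ Icc (0:ℝ) t₀, ∀ t ∈ Icc (0:ℝ) t₀,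
      ‖u' t - u' s‖ ≤ M * |t - s| ^ γ)
    (hv'Holder : ∃ γ M : ℝ, 0 < γ ∧ ∀ s ∈ Icc (0:ℝ) t₀, ∀ t ∈ Icc (0:ℝ) t₀,
      ‖v' t - v' s‖ ≤ M * |t - s| ^ γ)
    (hu0 : u 0 = u₀) (hv0 : v 0 = u₀)
    (hueq : ∀ t ∈ Icc (0:ℝ) t₀,
      u' t = A (u t) ((1 / Real.Gamma (1 - β)) • ∫ s in Ioc (0:ℝ) t, ((t - s) ^ (-β)) • u' s))
    (hveq : ∀ t ∈ Icc (0:ℝ) t₀,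
      v' t = A (v t) ((1 / Real.Gamma (1 - β)) • ∫ s in Ioc (0:ℝ) t, ((t - s) ^ (-β)) • v' s)) :
    ∃ t₀' : ℝ, 0 < t₀' ∧ t₀' ≤ t₀ ∧ EqOn u v (Icc 0 t₀') := by
  have h1β : (0:ℝ) < 1 - β := by linarith
  have hΓ : 0 < Real.Gamma (1 - β) := Real.Gamma_pos_of_pos h1β
  set c : ℝ := 1 / Real.Gamma (1 - β) with hcdef
  have hc0 : 0 < c := by positivity
  obtain ⟨γu, Mu, hγu, hHu⟩ := hu'Holder
  obtain ⟨γv, Mv, hγv, hHv⟩ := hv'Holder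
  have hcu : ContinuousOn u' (Icc 0 t₀) := holder_cont hγu hHu
  have hcv : ContinuousOn v' (Icc 0 t₀) := holder_cont hγv hHv
  obtain ⟨B, hB⟩ := isCompact_Icc.exists_bound_of_continuousOn hcu
  have hB0 : 0 ≤ B := le_trans (norm_nonneg _) (hB 0 ⟨le_refl 0, ht₀.le⟩)
  have hK0 : 0 ≤ K := le_trans (norm_nonneg _) (hAbd u₀)
  set a1 : ℝ := (L : ℝ) * (c * B / (1 - β)) with ha1
  set a2 : ℝ := K * c / (1 - β) with ha2
  have ha1' : 0 ≤ a1 := by positivity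
  have ha2' : 0 ≤ a2 := by positivity
  set F : ℝ → ℝ := fun t => a1 * t ^ (2 - β) + a2 * t ^ (1 - β) with hF
  -- choose t₀'
  have hFt : Filter.Tendsto F (nhds 0) (nhds 0) := by
    have e1 : Filter.Tendsto (fun t : ℝ => t ^ (2 - β)) (nhds 0) (nhds 0) := by
      have := (Real.continuousAt_rpow_const 0 (2 - β) (Or.inr (by linarith))).tendsto
      rwa [Real.zero_rpow (by linarith : (2:ℝ) - β ≠ 0)] at this
    have e2 : Filter.Tendsto (fun t : ℝ => t ^ (1 - β)) (nhds 0) (nhds 0) := by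
      have := (Real.continuousAt_rpow_const 0 (1 - β) (Or.inr (by linarith))).tendsto
      rwa [Real.zero_rpow h1β.ne'] at this
    have := ((e1.const_mul a1).add (e2.const_mul a2))
    simpa using this
  obtain ⟨ε, hε0, hε⟩ := Metric.eventually_nhds_iff.mp (hFt.eventually
    (Filter.tendsto_id.eventually_lt_const (by norm_num : (0:ℝ) < 1/2)))
  set t₁ : ℝ := min t₀ (ε / 2) with ht₁def
  have ht₁0 : 0 < t₁ := lt_min ht₀ (by linarith)
  have ht₁t₀ : t₁ ≤ t₀ := min_le_left _ _
  have hFmono : ∀ t, 0 ≤ t → t ≤ t₁ → F t ≤ F t₁ := by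
    intro t h0 h1
    have e1 : t ^ (2 - β) ≤ t₁ ^ (2 - β) := Real.rpow_le_rpow h0 h1 (by linarith)
    have e2 : t ^ (1 - β) ≤ t₁ ^ (1 - β) := Real.rpow_le_rpow h0 h1 (by linarith)
    have := add_le_add (mul_le_mul_of_nonneg_left e1 ha1') (mul_le_mul_of_nonneg_left e2 ha2')
    simpa [hF] using this
  have hFhalf : F t₁ < 1 / 2 := by
    apply hε
    rw [Real.dist_eq, sub_zero, abs_of_pos ht₁0]
    calc t₁ ≤ ε / 2 := min_le_right _ _
      _ < ε := by linarith
  -- maximum of ‖u' - v'‖ on [0, t₁]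
  have hsub1 : Icc (0:ℝ) t₁ ⊆ Icc 0 t₀ := Icc_subset_Icc le_rfl ht₁t₀
  have hcw : ContinuousOn (fun t => ‖u' t - v' t‖) (Icc 0 t₁) :=
    ((hcu.sub hcv).mono hsub1).norm
  obtain ⟨ts, htsmem, htsmax⟩ := isCompact_Icc.exists_isMaxOn
    (nonempty_Icc.mpr ht₁0.le) hcw
  set D : ℝ := ‖u' ts - v' ts‖ with hDdef
  have hD0 : 0 ≤ D := norm_nonneg _
  have hts0 : 0 ≤ ts := htsmem.1
  have htst₁ : ts ≤ t₁ := htsmem.2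
  have htsic : ts ∈ Icc (0:ℝ) t₀ := hsub1 htsmem
  -- bound on u - v
  have huvle : ∀ x ∈ Icc (0:ℝ) t₁, ‖u x - v x‖ ≤ D * x := by
    intro x hx
    have hd : ∀ y ∈ Icc (0:ℝ) t₁, HasDerivWithinAt (fun t => u t - v t) (u' y - v' y)
        (Icc 0 t₁) y := fun y hy =>
      ((hu y (hsub1 hy)).sub (hv y (hsub1 hy))).mono hsub1
    have := (convex_Icc (0:ℝ) t₁).norm_image_sub_le_of_norm_hasDerivWithin_le hd
      (fun y hy => htsmax hy) ⟨le_rfl, ht₁0.le⟩ hx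
    simp only [hu0, hv0, sub_self, sub_zero] at this
    calc ‖u x - v x‖ ≤ D * ‖x - 0‖ := by simpa using this
      _ = D * x := by rw [sub_zero, Real.norm_eq_abs, abs_of_nonneg hx.1]
  -- key contraction estimate at ts
  have htst₀ : ts ≤ t₀ := htst₁.trans ht₁t₀
  obtain ⟨Bv, hBv⟩ := isCompact_Icc.exists_bound_of_continuousOn hcv
  have key : D ≤ F ts * D := by
    have hIu : IntegrableOn (fun s => (ts - s) ^ (-β) • u' s) (Ioc 0 ts) :=
      smul_integrableOn' hβ1 hts0 htst₀ hcu (fun s hs => hB s ⟨hs.1.le, hs.2.trans htst₀⟩)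
    have hIv : IntegrableOn (fun s => (ts - s) ^ (-β) • v' s) (Ioc 0 ts) :=
      smul_integrableOn' hβ1 hts0 htst₀ hcv (fun s hs => hBv s ⟨hs.1.le, hs.2.trans htst₀⟩)
    have hIuB : ‖∫ s in Ioc (0:ℝ) ts, (ts - s) ^ (-β) • u' s‖ ≤ B * (ts ^ (1 - β) / (1 - β)) :=
      smul_norm_bound' hβ1 hts0 htst₀ hcu (fun s hs => hB s ⟨hs.1.le, hs.2.trans htst₀⟩)
    have hIwB : ‖∫ s in Ioc (0:ℝ) ts, (ts - s) ^ (-β) • (u' s - v' s)‖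
        ≤ D * (ts ^ (1 - β) / (1 - β)) :=
      smul_norm_bound' hβ1 hts0 htst₀ (hcu.sub hcv)
        (fun s hs => htsmax ⟨hs.1.le, hs.2.trans htst₁⟩)
    have hdiff : (∫ s in Ioc (0:ℝ) ts, (ts - s) ^ (-β) • u' s)
          - (∫ s in Ioc (0:ℝ) ts, (ts - s) ^ (-β) • v' s)
        = ∫ s in Ioc (0:ℝ) ts, (ts - s) ^ (-β) • (u' s - v' s) := by
      rw [← integral_sub hIu hIv]
      congr 1
      ext s
      rw [smul_sub]
    have huv : ‖u ts - v ts‖ ≤ D * ts := huvle ts htsmem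
    have hALip' : ‖A (u ts) - A (v ts)‖ ≤ (L : ℝ) * ‖u ts - v ts‖ := by
      have := hALip.dist_le_mul (u ts) (v ts)
      rwa [dist_eq_norm, dist_eq_norm] at this
    have hpow : ts ^ ((2:ℝ) - β) = ts * ts ^ (1 - β) := by
      rw [show (2:ℝ) - β = 1 + (1 - β) by ring, Real.rpow_add' hts0 (by linarith),
        Real.rpow_one]
    set Iu := ∫ s in Ioc (0:ℝ) ts, (ts - s) ^ (-β) • u' s with hIudef
    set Iv := ∫ s in Ioc (0:ℝ) ts, (ts - s) ^ (-β) • v' s with hIvdef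
    calc D = ‖A (u ts) (c • Iu) - A (v ts) (c • Iv)‖ := by
          rw [hDdef, hueq ts htsic, hveq ts htsic]
      _ = ‖(A (u ts) - A (v ts)) (c • Iu) + (A (v ts)) (c • (Iu - Iv))‖ := by
          rw [ContinuousLinearMap.sub_apply, smul_sub, map_sub]
          congr 1
          abel
      _ ≤ ‖(A (u ts) - A (v ts)) (c • Iu)‖ + ‖(A (v ts)) (c • (Iu - Iv))‖ := norm_add_le _ _
      _ ≤ ‖A (u ts) - A (v ts)‖ * ‖c • Iu‖ + ‖A (v ts)‖ * ‖c • (Iu - Iv)‖ :=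
          add_le_add (ContinuousLinearMap.le_opNorm _ _) (ContinuousLinearMap.le_opNorm _ _)
      _ = ‖A (u ts) - A (v ts)‖ * (c * ‖Iu‖) + ‖A (v ts)‖ * (c * ‖Iu - Iv‖) := by
          rw [norm_smul, norm_smul, Real.norm_eq_abs, abs_of_pos hc0]
      _ ≤ ((L : ℝ) * (D * ts)) * (c * (B * (ts ^ (1 - β) / (1 - β))))
            + K * (c * (D * (ts ^ (1 - β) / (1 - β)))) := by
          have e1 : ‖A (u ts) - A (v ts)‖ ≤ (L : ℝ) * (D * ts) :=
            hALip'.trans (mul_le_mul_of_nonneg_left huv (NNReal.coe_nonneg L))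
          have e2 : ‖Iu - Iv‖ ≤ D * (ts ^ (1 - β) / (1 - β)) := by rw [hdiff]; exact hIwB
          have hP : (0:ℝ) ≤ ts ^ (1 - β) / (1 - β) := by positivity
          refine add_le_add (mul_le_mul e1 (mul_le_mul_of_nonneg_left hIuB hc0.le)
            (by positivity) (mul_nonneg (NNReal.coe_nonneg L) (mul_nonneg hD0 hts0)))
            (mul_le_mul (hAbd _) (mul_le_mul_of_nonneg_left e2 hc0.le)
            (by positivity) hK0)
      _ = (a1 * ts ^ ((2:ℝ) - β) + a2 * ts ^ (1 - β)) * D := by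
          rw [hpow, ha1, ha2]
          ring
      _ = F ts * D := by rw [hF]
  have hDzero : D = 0 := by
    have h1 := hFmono ts hts0 htst₁
    have h2 : F ts * D ≤ F t₁ * D := mul_le_mul_of_nonneg_right h1 hD0
    have h3 : F t₁ * D ≤ 1 / 2 * D := mul_le_mul_of_nonneg_right hFhalf.le hD0
    clear_value c a1 a2 F t₁ D
    linarith
  refine ⟨t₁, ht₁0, ht₁t₀, fun x hx => ?_⟩
  have hle : ‖u x - v x‖ ≤ 0 := by
    have := huvle x hx
    rw [hDzero, zero_mul] at this
    exact this
  exact sub_eq_zero.mp (norm_le_zero_iff.mp hle)
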